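/- arXiv:1105.6065 — 3 statements merged into one kernel-verified Lean document; each statement's English description precedes it below -/
import Mathlib

section
/- Let T be an ℕ-valued random variable with P(T=0)=ρ and P(T=t)=(1-ρ)p(1-p)^{t-1} for t≥1, where 0<p<1 and 0≤ρ<1. Let n≥1 be an integer and K=⌈T/n⌉. Let K̃ be an ℕ-valued random variable with E[K̃]<∞ such that T and K̃ are conditionally independent given K. Let (D_b)_{b≥0} be identically distributed, nonnegative, integrable random variables with common mean d, with the family (D_b)_{b≥0} independent of the pair (T,K̃). Let l = n - 1/p + n(1-p)^n/(1-(1-p)^n). Then E[(nK̃ + D_{K̃} - T)·1{nK̃ ≥ T}] = (d + l)·P(nK̃ ≥ T) - ρ·l + n·E[max(K̃-K,0)]. -/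
/-!
On `{T ≤ n K'} = {K ≤ K'}` the detection delay splits as `(n K - T) + n (K' - K)⁺ + D_{K'}`.
Since the family `D` is independent of `(T, K')`, `E[D_{K'}; K ≤ K'] = d · P(K ≤ K')`.
For the sampling lag `n K - T`, conditional independence given `K` factors every event
`{K = k ≤ K'}`: `E[n K - T; K = k ≤ K'] · P(K = k) = E[n K - T; K = k] · P(K = k ≤ K')`.
By memorylessness, given `K = k ≥ 1` the lag `n K - T` is a geometric variable truncated to
`{0, …, n - 1}`, whose mean is `l`; and `K = 0` forces `T = 0`, an event of mass `ρ` and lag `0`.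
Summing over `k` gives `E[n K - T; K ≤ K'] = l · (P(K ≤ K') - ρ)`.
-/

open MeasureTheory ProbabilityTheory

section SamplingLag
open Finset

lemma sum_range_mul_geom (p : ℝ) (n : ℕ) :
    ∑ j ∈ range n, p * (1 - p) ^ j = 1 - (1 - p) ^ n := by
  rw [← mul_sum, ← geom_sum_mul_neg]; ring

lemma mul_sum_range_sub_mul_geom (p : ℝ) (n : ℕ) :
    p * ∑ j ∈ range n, ((n : ℝ) - 1 - j) * (p * (1 - p) ^ j)
      = (n * p - 1) * (1 - (1 - p) ^ n) + n * p * (1 - p) ^ n := by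
  induction n with
  | zero => simp
  | succ n ih =>
    have hshift : ∑ j ∈ range n, ((n : ℝ) + 1 - 1 - j) * (p * (1 - p) ^ j)
        = ∑ j ∈ range n, ((n : ℝ) - 1 - j) * (p * (1 - p) ^ j)
          + ∑ j ∈ range n, p * (1 - p) ^ j := by
      rw [← sum_add_distrib]; exact sum_congr rfl fun j _ => by ring
    rw [sum_range_succ, Nat.cast_succ, hshift, sum_range_mul_geom]
    linear_combination ih

/-- The paper's `l`: the mean of the lag `n K - T` given `K = k ≥ 1`. -/
noncomputable def coarseSamplingDelay (n : ℕ) (p : ℝ) : ℝ :=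
  n - 1 / p + n * (1 - p) ^ n / (1 - (1 - p) ^ n)

lemma sum_range_sub_coarseSamplingDelay_mul_geom {p : ℝ} (hp : p ≠ 0) {n : ℕ}
    (hq : (1 - p) ^ n ≠ 1) :
    ∑ j ∈ range n, ((n : ℝ) - 1 - j - coarseSamplingDelay n p) * (p * (1 - p) ^ j) = 0 := by
  have hq' : 1 - (1 - p) ^ n ≠ 0 := sub_ne_zero.mpr (Ne.symm hq)
  have hsplit : ∑ j ∈ range n, ((n : ℝ) - 1 - j - coarseSamplingDelay n p) * (p * (1 - p) ^ j)
      = ∑ j ∈ range n, ((n : ℝ) - 1 - j) * (p * (1 - p) ^ j)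
        - coarseSamplingDelay n p * ∑ j ∈ range n, p * (1 - p) ^ j := by
    rw [mul_sum, ← sum_sub_distrib]; exact sum_congr rfl fun j _ => by ring
  have h := mul_sum_range_sub_mul_geom p n
  rw [hsplit, sum_range_mul_geom, coarseSamplingDelay]
  generalize ∑ j ∈ range n, ((n : ℝ) - 1 - j) * (p * (1 - p) ^ j) = S at h ⊢
  field_simp
  linear_combination h

lemma Nat.ceilDiv_eq_add_one_iff {n t k : ℕ} (hn : 0 < n) :
    t ⌈/⌉ n = k + 1 ↔ t ∈ Ioc (n * k) (n * k + n) := by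
  rw [mem_Ioc, ← mul_add_one, le_antisymm_iff, ceilDiv_le_iff_le_mul hn, Nat.add_one_le_iff,
    ← not_le, ceilDiv_le_iff_le_mul hn, not_le, and_comm]

lemma Nat.ceilDiv_eq_zero_iff {n t : ℕ} (hn : 0 < n) : t ⌈/⌉ n = 0 ↔ t = 0 := by
  rw [← Nat.le_zero, ceilDiv_le_iff_le_mul hn, mul_zero, Nat.le_zero]

def samplingLag (n t : ℕ) : ℝ := ((n * (t ⌈/⌉ n) : ℕ) : ℝ) - t

lemma samplingLag_block {n : ℕ} (hn : 0 < n) (k : ℕ) {j : ℕ} (hj : j < n) :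
    samplingLag n (n * k + 1 + j) = n - 1 - j := by
  have hceil : (n * k + 1 + j) ⌈/⌉ n = k + 1 :=
    (Nat.ceilDiv_eq_add_one_iff hn).mpr (mem_Ioc.mpr ⟨by omega, by omega⟩)
  rw [samplingLag, hceil]
  push_cast
  ring

lemma samplingLag_nonneg {n : ℕ} (hn : 0 < n) (t : ℕ) : 0 ≤ samplingLag n t := by
  rw [samplingLag, sub_nonneg, Nat.cast_le]
  exact (ceilDiv_le_iff_le_mul hn).mp le_rfl

lemma samplingLag_le (n t : ℕ) : samplingLag n t ≤ n := by
  have h : n * (t ⌈/⌉ n) ≤ t + n := by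
    rw [Nat.ceilDiv_eq_add_pred_div, mul_comm]
    exact (Nat.div_mul_le_self _ _).trans (by omega)
  rw [samplingLag, sub_le_iff_le_add, ← Nat.cast_add, Nat.cast_le, add_comm]
  exact h

lemma ite_le_mul_eq_samplingLag_add {n : ℕ} (hn : 0 < n) (t b : ℕ) (x : ℝ) :
    (if t ≤ n * b then ((n * b : ℕ) : ℝ) + x - t else 0)
      = (if t ⌈/⌉ n ≤ b then samplingLag n t else 0)
        + n * max ((b : ℝ) - (t ⌈/⌉ n : ℕ)) 0 + (if t ≤ n * b then x else 0) := by
  by_cases h : t ≤ n * b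
  · have hK : t ⌈/⌉ n ≤ b := (ceilDiv_le_iff_le_mul hn).mpr h
    rw [if_pos h, if_pos hK, if_pos h, max_eq_left (sub_nonneg.mpr (Nat.cast_le.mpr hK)),
      samplingLag]
    push_cast
    ring
  · have hK : b < t ⌈/⌉ n := not_le.mp fun hK => h ((ceilDiv_le_iff_le_mul hn).mp hK)
    rw [if_neg h, if_neg hK.not_ge, if_neg h,
      max_eq_right (sub_nonpos.mpr (Nat.cast_le.mpr hK.le))]
    ring

variable {Ω α : Type*} [MeasurableSpace Ω] [MeasurableSpace α] [MeasurableSingletonClass α]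
  {P : Measure Ω} [IsFiniteMeasure P]

lemma setIntegral_comp_inter_preimage_finset {T : Ω → α} (hT : Measurable T) (s : Finset α)
    {A : Set Ω} (hA : MeasurableSet A) (f : α → ℝ) :
    ∫ ω in A ∩ T ⁻¹' s, f (T ω) ∂P = ∑ t ∈ s, f t * P.real (A ∩ T ⁻¹' {t}) := by
  have hpieces : ∀ t ∈ s, MeasurableSet (A ∩ T ⁻¹' {t}) :=
    fun t _ => hA.inter (hT (measurableSet_singleton t))
  have hunion : A ∩ T ⁻¹' s = ⋃ t ∈ s, A ∩ T ⁻¹' {t} := by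
    rw [← Set.inter_iUnion₂, ← Set.biUnion_preimage_singleton]; rfl
  rw [hunion, integral_biUnion_finset s hpieces
    (fun t _ u _ htu => ((pairwise_disjoint_fiber T htu).mono Set.inter_subset_right
      Set.inter_subset_right))
    (fun t ht => (integrableOn_const (C := f t)).congr_fun (fun ω hω => by rw [hω.2])
      (hpieces t ht))]
  refine sum_congr rfl fun t ht => ?_
  rw [setIntegral_congr_fun (hpieces t ht) (fun ω hω => by rw [hω.2]), setIntegral_const,
    smul_eq_mul, mul_comm]

lemma setIntegral_comp_preimage_finset {T : Ω → α} (hT : Measurable T) (s : Finset α)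
    (f : α → ℝ) :
    ∫ ω in T ⁻¹' s, f (T ω) ∂P = ∑ t ∈ s, f t * P.real (T ⁻¹' {t}) := by
  simpa only [Set.univ_inter] using setIntegral_comp_inter_preimage_finset (P := P) hT s .univ f

lemma measureReal_preimage_inter_mul_of_singleton [Countable α] {X : Ω → α} (hX : Measurable X)
    {A B : Set Ω}
    (h : ∀ b, P.real (X ⁻¹' {b} ∩ A) * P.real B = P.real A * P.real (X ⁻¹' {b} ∩ B))
    (S : Set α) :
    P.real (X ⁻¹' S ∩ A) * P.real B = P.real A * P.real (X ⁻¹' S ∩ B) := by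
  have hfib : ∀ b ∈ S, MeasurableSet (X ⁻¹' {b}) := fun b _ => hX (measurableSet_singleton b)
  have hsum : ∀ C, P (X ⁻¹' S ∩ C) = ∑' b : S, P (X ⁻¹' {(b : α)} ∩ C) := fun C => by
    simp only [← Measure.restrict_apply (hX (S.to_countable.measurableSet)),
      ← Measure.restrict_apply (hfib _ (Subtype.prop _)),
      tsum_measure_preimage_singleton S.to_countable hfib]
  have hennreal : ∀ b, P (X ⁻¹' {b} ∩ A) * P B = P A * P (X ⁻¹' {b} ∩ B) := fun b => by
    rw [← ENNReal.toReal_eq_toReal_iff' (by finiteness) (by finiteness), ENNReal.toReal_mul,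
      ENNReal.toReal_mul]
    exact h b
  simp only [measureReal_def, ← ENNReal.toReal_mul, hsum, ← ENNReal.tsum_mul_right,
    ← ENNReal.tsum_mul_left, hennreal]

lemma setIntegral_inter_mul_of_condIndep {β : Type*} [MeasurableSpace β]
    [MeasurableSingletonClass β] [Countable β] {T : Ω → α} {X : Ω → β}
    (hT : Measurable T) (hX : Measurable X) (s : Finset α)
    (h : ∀ t ∈ s, ∀ b, P.real (X ⁻¹' {b} ∩ T ⁻¹' {t}) * P.real (T ⁻¹' s)
      = P.real (T ⁻¹' {t}) * P.real (X ⁻¹' {b} ∩ T ⁻¹' s))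
    (S : Set β) (f : α → ℝ) :
    (∫ ω in X ⁻¹' S ∩ T ⁻¹' s, f (T ω) ∂P) * P.real (T ⁻¹' s)
      = (∫ ω in T ⁻¹' s, f (T ω) ∂P) * P.real (X ⁻¹' S ∩ T ⁻¹' s) := by
  rw [setIntegral_comp_inter_preimage_finset hT s (hX S.to_countable.measurableSet) f,
    setIntegral_comp_preimage_finset hT s f, sum_mul, sum_mul]
  refine sum_congr rfl fun t ht => ?_
  rw [mul_assoc, mul_assoc, measureReal_preimage_inter_mul_of_singleton hX (h t ht)]

lemma integrable_samplingLag_comp {n : ℕ} (hn : 0 < n) {T : Ω → ℕ} (hT : Measurable T) :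
    Integrable (fun ω => samplingLag n (T ω)) P :=
  .of_bound ((measurable_of_countable (samplingLag n)).comp hT).aestronglyMeasurable n <|
    .of_forall fun ω => by
      rw [Real.norm_of_nonneg (samplingLag_nonneg hn _)]; exact samplingLag_le n (T ω)

lemma setIntegral_samplingLag_sub_eq_zero {p ρ : ℝ} (hp0 : 0 < p) (hp1 : p < 1) {T : Ω → ℕ}
    (hT : Measurable T)
    (hTdist : ∀ t : ℕ, 1 ≤ t → P.real (T ⁻¹' {t}) = (1 - ρ) * p * (1 - p) ^ (t - 1))
    {n : ℕ} (hn : 0 < n) (k : ℕ) :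
    ∫ ω in T ⁻¹' Ioc (n * k) (n * k + n),
        (samplingLag n (T ω) - coarseSamplingDelay n p) ∂P = 0 := by
  have hterm : ∀ j ∈ range n,
      (samplingLag n (n * k + 1 + j) - coarseSamplingDelay n p) * P.real (T ⁻¹' {n * k + 1 + j})
        = (1 - ρ) * (1 - p) ^ (n * k)
          * (((n : ℝ) - 1 - j - coarseSamplingDelay n p) * (p * (1 - p) ^ j)) := fun j hj => by
    rw [samplingLag_block hn k (mem_range.mp hj), hTdist _ (by omega),
      show n * k + 1 + j - 1 = n * k + j by omega, pow_add]
    ring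
  rw [setIntegral_comp_preimage_finset hT _
      (fun t => samplingLag n t - coarseSamplingDelay n p),
    ← Ico_add_one_add_one_eq_Ioc, sum_Ico_eq_sum_range,
    show n * k + n + 1 - (n * k + 1) = n by omega, sum_congr rfl hterm, ← mul_sum,
    sum_range_sub_coarseSamplingDelay_mul_geom hp0.ne'
      (pow_lt_one₀ (by linarith) (by linarith) hn.ne').ne,
    mul_zero]

lemma setIntegral_inter_samplingLag_sub_eq_zero {p ρ : ℝ} (hp0 : 0 < p) (hp1 : p < 1)
    (hρ1 : ρ < 1) {T : Ω → ℕ} (hT : Measurable T)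
    (hTdist : ∀ t : ℕ, 1 ≤ t → P.real (T ⁻¹' {t}) = (1 - ρ) * p * (1 - p) ^ (t - 1))
    {n : ℕ} (hn : 0 < n) {K' : Ω → ℕ} (hK' : Measurable K')
    (hcondind : ∀ t b k : ℕ,
      P.real {ω | T ω = t ∧ K' ω = b ∧ T ω ⌈/⌉ n = k} * P.real {ω | T ω ⌈/⌉ n = k}
        = P.real {ω | T ω = t ∧ T ω ⌈/⌉ n = k}
          * P.real {ω | K' ω = b ∧ T ω ⌈/⌉ n = k})
    (k : ℕ) :
    ∫ ω in K' ⁻¹' Set.Ici (k + 1) ∩ T ⁻¹' Ioc (n * k) (n * k + n),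
        (samplingLag n (T ω) - coarseSamplingDelay n p) ∂P = 0 := by
  have hpos : 0 < P.real (T ⁻¹' Ioc (n * k) (n * k + n)) := by
    refine lt_of_lt_of_le ?_ (measureReal_mono (Set.preimage_mono
      (Set.singleton_subset_iff.mpr (mem_Ioc.mpr ⟨Nat.lt_succ_self _, by omega⟩))))
    have : (0 : ℝ) < 1 - p := by linarith
    have : (0 : ℝ) < 1 - ρ := by linarith
    rw [hTdist _ le_add_self]
    positivity
  have hci : ∀ t ∈ Ioc (n * k) (n * k + n), ∀ b,
      P.real (K' ⁻¹' {b} ∩ T ⁻¹' {t}) * P.real (T ⁻¹' Ioc (n * k) (n * k + n))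
        = P.real (T ⁻¹' {t}) * P.real (K' ⁻¹' {b} ∩ T ⁻¹' Ioc (n * k) (n * k + n)) := by
    intro t ht b
    have htk : t ⌈/⌉ n = k + 1 := (Nat.ceilDiv_eq_add_one_iff hn).mpr ht
    convert hcondind t b (k + 1) using 3 <;> ext ω <;>
      simp only [Set.mem_inter_iff, Set.mem_preimage, Set.mem_singleton_iff, Set.mem_ofPred_eq,
        Finset.mem_coe, ← Nat.ceilDiv_eq_add_one_iff hn] <;>
      grind
  have h := setIntegral_inter_mul_of_condIndep hT hK' _ hci (Set.Ici (k + 1))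
    (fun t => samplingLag n t - coarseSamplingDelay n p)
  rw [setIntegral_samplingLag_sub_eq_zero hp0 hp1 hT hTdist hn k, zero_mul] at h
  exact (mul_eq_zero.mp h).resolve_right hpos.ne'

theorem setIntegral_samplingLag {p ρ : ℝ} (hp0 : 0 < p) (hp1 : p < 1) (hρ1 : ρ < 1)
    {T : Ω → ℕ} (hT : Measurable T) (hT0 : P.real (T ⁻¹' {0}) = ρ)
    (hTdist : ∀ t : ℕ, 1 ≤ t → P.real (T ⁻¹' {t}) = (1 - ρ) * p * (1 - p) ^ (t - 1))
    {n : ℕ} (hn : 0 < n) {K' : Ω → ℕ} (hK' : Measurable K')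
    (hcondind : ∀ t b k : ℕ,
      P.real {ω | T ω = t ∧ K' ω = b ∧ T ω ⌈/⌉ n = k} * P.real {ω | T ω ⌈/⌉ n = k}
        = P.real {ω | T ω = t ∧ T ω ⌈/⌉ n = k}
          * P.real {ω | K' ω = b ∧ T ω ⌈/⌉ n = k}) :
    ∫ ω in {ω | T ω ⌈/⌉ n ≤ K' ω}, samplingLag n (T ω) ∂P
      = coarseSamplingDelay n p * (P.real {ω | T ω ⌈/⌉ n ≤ K' ω} - ρ) := by
  set l := coarseSamplingDelay n p
  set E : ℕ → Set Ω := fun k => K' ⁻¹' Set.Ici k ∩ (fun ω => T ω ⌈/⌉ n) ⁻¹' {k}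
  have hEm : ∀ k, MeasurableSet (E k) := fun k => (hK' measurableSet_Ici).inter
    ((measurable_of_countable (· ⌈/⌉ n)).comp hT (measurableSet_singleton k))
  have hEdisj : Pairwise (Function.onFun Disjoint E) := fun i j hij =>
    (pairwise_disjoint_fiber (fun ω => T ω ⌈/⌉ n) hij).mono Set.inter_subset_right
      Set.inter_subset_right
  have hEunion : ⋃ k, E k = {ω | T ω ⌈/⌉ n ≤ K' ω} := by
    ext ω; simp [E]
  have hE0 : ∫ ω in E 0, (samplingLag n (T ω) - l) ∂P = -(l * ρ) := by
    have h0 : E 0 = T ⁻¹' {0} := Set.ext fun ω => by simp [E, Nat.ceilDiv_eq_zero_iff hn]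
    rw [h0, setIntegral_congr_fun (hT (measurableSet_singleton 0))
      (fun ω (hω : T ω = 0) => by rw [hω]), setIntegral_const, hT0]
    simp [samplingLag, mul_comm]
  have hEsucc : ∀ k, ∫ ω in E (k + 1), (samplingLag n (T ω) - l) ∂P = 0 := fun k => by
    have hblock : (fun ω => T ω ⌈/⌉ n) ⁻¹' {k + 1} = T ⁻¹' Ioc (n * k) (n * k + n) :=
      Set.ext fun ω => Nat.ceilDiv_eq_add_one_iff hn
    simp only [E, hblock]
    exact setIntegral_inter_samplingLag_sub_eq_zero hp0 hp1 hρ1 hT hTdist hn hK' hcondind k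
  have hint := integrable_samplingLag_comp (P := P) hn hT
  have hsum := integral_iUnion (f := fun ω => samplingLag n (T ω) - l) hEm hEdisj
    (hint.sub (integrable_const l)).integrableOn
  rw [hEunion, tsum_eq_single 0 fun k hk => by
    obtain ⟨k, rfl⟩ := Nat.exists_eq_succ_of_ne_zero hk; exact hEsucc k, hE0,
    integral_sub hint.integrableOn (integrable_const l).integrableOn, setIntegral_const,
    smul_eq_mul] at hsum
  linarith

end SamplingLag

section RandomIndex
variable {Ω β : Type*} [MeasurableSpace Ω] [MeasurableSpace β] {P : Measure Ω}

lemma lintegral_ofReal_indicator_randomIndex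
    {D : ℕ → Ω → ℝ} (hD : ∀ b, Measurable (D b)) (hDint : ∀ b, Integrable (D b) P)
    (hDnonneg : ∀ b ω, 0 ≤ D b ω) {d : ℝ} (hDmean : ∀ b, ∫ ω, D b ω ∂P = d)
    {Y : Ω → β} (hY : Measurable Y) (hind : IndepFun (fun ω b => D b ω) Y P)
    {N : β → ℕ} (hN : Measurable N) {S : Set β} (hS : MeasurableSet S) :
    ∫⁻ ω, ENNReal.ofReal ((Y ⁻¹' S).indicator (fun ω => D (N (Y ω)) ω) ω) ∂P
      = ENNReal.ofReal d * P (Y ⁻¹' S) := by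
  have hpiece : ∀ b, MeasurableSet (S ∩ N ⁻¹' {b}) :=
    fun b => hS.inter (hN (measurableSet_singleton b))
  have hsplit : ∀ ω, ENNReal.ofReal ((Y ⁻¹' S).indicator (fun ω => D (N (Y ω)) ω) ω)
      = ∑' b, ENNReal.ofReal (D b ω) * (S ∩ N ⁻¹' {b}).indicator (fun _ => 1) (Y ω) := by
    intro ω
    rw [tsum_eq_single (N (Y ω)) fun b hb => by simp [Ne.symm hb]]
    by_cases h : Y ω ∈ S <;> simp [h]
  have hterm : ∀ b,
      ∫⁻ ω, ENNReal.ofReal (D b ω) * (S ∩ N ⁻¹' {b}).indicator (fun _ => 1) (Y ω) ∂P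
        = ENNReal.ofReal d * P (Y ⁻¹' (S ∩ N ⁻¹' {b})) := by
    intro b
    have hindb : IndepFun (fun ω => ENNReal.ofReal (D b ω))
        (fun ω => (S ∩ N ⁻¹' {b}).indicator (fun _ => (1 : ENNReal)) (Y ω)) P :=
      hind.comp (φ := fun x : ℕ → ℝ => ENNReal.ofReal (x b))
        (ψ := (S ∩ N ⁻¹' {b}).indicator fun _ => 1) (measurable_pi_apply b).ennreal_ofReal
        (measurable_const.indicator (hpiece b))
    calc _ = (∫⁻ ω, ENNReal.ofReal (D b ω) ∂P)
          * ∫⁻ ω, (S ∩ N ⁻¹' {b}).indicator (fun _ => 1) (Y ω) ∂P :=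
        lintegral_mul_eq_lintegral_mul_lintegral_of_indepFun (hD b).ennreal_ofReal
          ((measurable_const.indicator (hpiece b)).comp hY) hindb
      _ = _ := by
        rw [← ofReal_integral_eq_lintegral_ofReal (hDint b) (.of_forall (hDnonneg b)), hDmean,
          lintegral_indicator_const_comp hY (hpiece b), one_mul]
  have hdisj : Pairwise (Function.onFun Disjoint fun b => Y ⁻¹' (S ∩ N ⁻¹' {b})) :=
    fun i j hij => ((pairwise_disjoint_fiber N hij).mono Set.inter_subset_right
      Set.inter_subset_right).preimage Y
  rw [lintegral_congr hsplit, lintegral_tsum (f := fun b ω =>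
      ENNReal.ofReal (D b ω) * (S ∩ N ⁻¹' {b}).indicator (fun _ => 1) (Y ω)) fun b =>
      ((hD b).ennreal_ofReal.mul ((measurable_const.indicator (hpiece b)).comp hY)).aemeasurable,
    tsum_congr hterm, ENNReal.tsum_mul_left, ← measure_iUnion hdisj fun b => hY (hpiece b)]
  congr 2
  ext ω; simp

lemma integrable_indicator_randomIndex [IsFiniteMeasure P]
    {D : ℕ → Ω → ℝ} (hD : ∀ b, Measurable (D b)) (hDint : ∀ b, Integrable (D b) P)
    (hDnonneg : ∀ b ω, 0 ≤ D b ω) {d : ℝ} (hDmean : ∀ b, ∫ ω, D b ω ∂P = d)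
    {Y : Ω → β} (hY : Measurable Y) (hind : IndepFun (fun ω b => D b ω) Y P)
    {N : β → ℕ} (hN : Measurable N) {S : Set β} (hS : MeasurableSet S) :
    Integrable ((Y ⁻¹' S).indicator fun ω => D (N (Y ω)) ω) P := by
  have hm : Measurable fun ω => D (N (Y ω)) ω :=
    (measurable_from_prod_countable_left (f := fun q : Ω × ℕ => D q.2 q.1) hD).comp
      (measurable_id.prodMk (hN.comp hY))
  refine ⟨(hm.indicator (hY hS)).aestronglyMeasurable,
    (hasFiniteIntegral_iff_ofReal (.of_forall fun ω => ?_)).mpr ?_⟩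
  · exact Set.indicator_nonneg (fun ω _ => hDnonneg _ ω) ω
  · rw [lintegral_ofReal_indicator_randomIndex hD hDint hDnonneg hDmean hY hind hN hS]
    finiteness

lemma integral_indicator_randomIndex [IsFiniteMeasure P]
    {D : ℕ → Ω → ℝ} (hD : ∀ b, Measurable (D b)) (hDint : ∀ b, Integrable (D b) P)
    (hDnonneg : ∀ b ω, 0 ≤ D b ω) {d : ℝ} (hDmean : ∀ b, ∫ ω, D b ω ∂P = d)
    {Y : Ω → β} (hY : Measurable Y) (hind : IndepFun (fun ω b => D b ω) Y P)
    {N : β → ℕ} (hN : Measurable N) {S : Set β} (hS : MeasurableSet S) :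
    ∫ ω, (Y ⁻¹' S).indicator (fun ω => D (N (Y ω)) ω) ω ∂P
      = d * P.real (Y ⁻¹' S) := by
  have hd : 0 ≤ d := hDmean 0 ▸ integral_nonneg (hDnonneg 0)
  rw [integral_eq_lintegral_of_nonneg_ae
      (.of_forall fun ω => Set.indicator_nonneg (fun ω _ => hDnonneg _ ω) ω)
      (integrable_indicator_randomIndex hD hDint hDnonneg hDmean hY hind hN hS).1,
    lintegral_ofReal_indicator_randomIndex hD hDint hDnonneg hDmean hY hind hN hS,
    ENNReal.toReal_mul, ENNReal.toReal_ofReal hd, measureReal_def]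

lemma integrable_max_natCast_sub_zero {X Y : Ω → ℕ} (hX : Measurable X)
    (hXint : Integrable (fun ω => (X ω : ℝ)) P) (hY : Measurable Y) :
    Integrable (fun ω => max ((X ω : ℝ) - Y ω) 0) P :=
  hXint.mono' ((measurable_of_countable fun q : ℕ × ℕ => max ((q.1 : ℝ) - q.2) 0).comp
      (hX.prodMk hY)).aestronglyMeasurable <|
    .of_forall fun ω => by
      rw [Real.norm_of_nonneg (le_max_right _ _)]
      exact max_le (by simp) (Nat.cast_nonneg _)

end RandomIndex

theorem detection_delay_decoupling_general
    {Ω : Type*} [MeasurableSpace Ω] (P : Measure Ω) [IsProbabilityMeasure P]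
    (p ρ : ℝ) (hp0 : 0 < p) (hp1 : p < 1) (hρ1 : ρ < 1)
    (T : Ω → ℕ) (hT : Measurable T)
    (hT0 : (P {ω | T ω = 0}).toReal = ρ)
    (hTdist : ∀ t : ℕ, 1 ≤ t →
      (P {ω | T ω = t}).toReal = (1 - ρ) * p * (1 - p) ^ (t - 1))
    (n : ℕ) (hn : 1 ≤ n)
    (K : Ω → ℕ) (hK : ∀ ω, K ω = (T ω + n - 1) / n)
    (K' : Ω → ℕ) (hK' : Measurable K')
    (hK'int : Integrable (fun ω => (K' ω : ℝ)) P)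
    (hcondind : ∀ t b k : ℕ,
      (P {ω | T ω = t ∧ K' ω = b ∧ K ω = k}).toReal * (P {ω | K ω = k}).toReal
        = (P {ω | T ω = t ∧ K ω = k}).toReal
            * (P {ω | K' ω = b ∧ K ω = k}).toReal)
    (D : ℕ → Ω → ℝ) (hDmeas : ∀ b, Measurable (D b))
    (hDnonneg : ∀ b ω, 0 ≤ D b ω)
    (hDint : ∀ b, Integrable (D b) P)
    (d : ℝ) (hDmean : ∀ b, ∫ ω, D b ω ∂P = d)
    (hDind : IndepFun (fun ω => fun b => D b ω) (fun ω => (T ω, K' ω)) P)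
    (l : ℝ)
    (hl : l = (n : ℝ) - 1 / p + (n : ℝ) * (1 - p) ^ n / (1 - (1 - p) ^ n)) :
    ∫ ω, (if T ω ≤ n * K' ω
            then ((n * K' ω : ℕ) : ℝ) + D (K' ω) ω - (T ω : ℝ) else 0) ∂P
      = (d + l) * (P {ω | T ω ≤ n * K' ω}).toReal - ρ * l
          + (n : ℝ) * ∫ ω, max ((K' ω : ℝ) - (K ω : ℝ)) 0 ∂P := by
  obtain rfl : K = fun ω => T ω ⌈/⌉ n := funext hK
  obtain rfl : l = coarseSamplingDelay n p := hl
  have hevent : {ω | T ω ⌈/⌉ n ≤ K' ω} = {ω | T ω ≤ n * K' ω} :=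
    Set.ext fun ω => ceilDiv_le_iff_le_mul (b := T ω) hn
  have hY : Measurable fun ω => (T ω, K' ω) := hT.prodMk hK'
  have hS : MeasurableSet {x : ℕ × ℕ | x.1 ≤ n * x.2} := (Set.to_countable _).measurableSet
  have hlag :
      Integrable ({ω | T ω ⌈/⌉ n ≤ K' ω}.indicator fun ω => samplingLag n (T ω)) P :=
    (integrable_samplingLag_comp hn hT).indicator (hevent ▸ hY hS)
  have hmax : Integrable (fun ω => (n : ℝ) * max ((K' ω : ℝ) - (T ω ⌈/⌉ n : ℕ)) 0) P :=
    (integrable_max_natCast_sub_zero hK' hK'int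
      ((measurable_of_countable (· ⌈/⌉ n)).comp hT)).const_mul (n : ℝ)
  have hdelay : Integrable ({ω | T ω ≤ n * K' ω}.indicator fun ω => D (K' ω) ω) P :=
    integrable_indicator_randomIndex hDmeas hDint hDnonneg hDmean hY hDind measurable_snd hS
  have hdelay_eq : ∫ ω, {ω | T ω ≤ n * K' ω}.indicator (fun ω => D (K' ω) ω) ω ∂P
      = d * P.real {ω | T ω ≤ n * K' ω} :=
    integral_indicator_randomIndex hDmeas hDint hDnonneg hDmean hY hDind measurable_snd hS
  calc _ = ∫ ω, ({ω | T ω ⌈/⌉ n ≤ K' ω}.indicator (fun ω => samplingLag n (T ω)) ω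
          + n * max ((K' ω : ℝ) - (T ω ⌈/⌉ n : ℕ)) 0
          + {ω | T ω ≤ n * K' ω}.indicator (fun ω => D (K' ω) ω) ω) ∂P := by
        congr 1; ext ω
        simp only [ite_le_mul_eq_samplingLag_add hn, Set.indicator_apply, Set.mem_ofPred_eq]
    _ = _ := by
      rw [integral_add ?_ hdelay, integral_add hlag hmax, integral_const_mul,
        integral_indicator (hevent ▸ hY hS),
        setIntegral_samplingLag hp0 hp1 hρ1 hT hT0 hTdist hn hK' hcondind,
        hdelay_eq, hevent, measureReal_def]
      · ring
      · exact hlag.add hmax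

/-- Theorem 1 (detection-delay decoupling identity). The change time `T` has an atom
`ρ` at `0` and a geometric `(p)` distribution on `{1,2,...}`; samples are taken every
`n` slots so the change is first observable at batch `K = ⌈T/n⌉`; `K'` (the paper's
`K̃`) is the batch index at which the detector stops, conditionally independent of
`T` given `K`; `D_b` is the network delay of batch `b`, identically distributed with
mean `d`, the family `(D_b)` being independent of `(T, K')`. Then
`E[(nK' + D_{K'} - T) · 1{nK' ≥ T}]
   = (d + l) · P(nK' ≥ T) - ρ · l + n · E[max(K' - K, 0)]`
with `l = n - 1/p + n (1-p)^n / (1 - (1-p)^n)`. -/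
theorem detection_delay_decoupling
    {Ω : Type*} [MeasurableSpace Ω] (P : Measure Ω) [IsProbabilityMeasure P]
    (p ρ : ℝ) (hp0 : 0 < p) (hp1 : p < 1) (hρ0 : 0 ≤ ρ) (hρ1 : ρ < 1)
    (T : Ω → ℕ) (hT : Measurable T)
    (hT0 : (P {ω | T ω = 0}).toReal = ρ)
    (hTdist : ∀ t : ℕ, 1 ≤ t →
      (P {ω | T ω = t}).toReal = (1 - ρ) * p * (1 - p) ^ (t - 1))
    (n : ℕ) (hn : 1 ≤ n)
    (K : Ω → ℕ) (hK : ∀ ω, K ω = (T ω + n - 1) / n)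
    (K' : Ω → ℕ) (hK' : Measurable K')
    (hK'int : Integrable (fun ω => (K' ω : ℝ)) P)
    (hcondind : ∀ t b k : ℕ,
      (P {ω | T ω = t ∧ K' ω = b ∧ K ω = k}).toReal * (P {ω | K ω = k}).toReal
        = (P {ω | T ω = t ∧ K ω = k}).toReal
            * (P {ω | K' ω = b ∧ K ω = k}).toReal)
    (D : ℕ → Ω → ℝ) (hDmeas : ∀ b, Measurable (D b))
    (hDnonneg : ∀ b ω, 0 ≤ D b ω)
    (hDint : ∀ b, Integrable (D b) P)
    (hDident : ∀ b b' : ℕ, Measure.map (D b) P = Measure.map (D b') P)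
    (d : ℝ) (hDmean : ∀ b, ∫ ω, D b ω ∂P = d)
    (hDind : IndepFun (fun ω => fun b => D b ω) (fun ω => (T ω, K' ω)) P)
    (l : ℝ)
    (hl : l = (n : ℝ) - 1 / p + (n : ℝ) * (1 - p) ^ n / (1 - (1 - p) ^ n)) :
    ∫ ω, (if T ω ≤ n * K' ω
            then ((n * K' ω : ℕ) : ℝ) + D (K' ω) ω - (T ω : ℝ) else 0) ∂P
      = (d + l) * (P {ω | T ω ≤ n * K' ω}).toReal - ρ * l
          + (n : ℝ) * ∫ ω, max ((K' ω : ℝ) - (K ω : ℝ)) 0 ∂P :=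
  detection_delay_decoupling_general P p ρ hp0 hp1 hρ1 T hT hT0 hTdist n hn K hK K' hK' hK'int
    hcondind D hDmeas hDnonneg hDint d hDmean hDind l hl
end

section
/- Let T be a random variable with P(T=t)=p(1-p)^{t-1} for integers t≥1, where 0<p<1. Let n≥1 be an integer, K=⌈T/n⌉, and let K̃ be an ℕ-valued random variable such that T and K̃ are conditionally independent given K. Let l = n - 1/p + n(1-p)^n/(1-(1-p)^n). Then E[(nK - T)·1{K̃ ≥ K}] = l·P(K̃ ≥ K). -/
/-!
Given the batch `K = k`, the change slot `T` lies in the `k`-th block of `n` slots with weights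
proportional to `(1 - p) ^ (t - 1)`: by memorylessness this is the same truncated geometric shape
for every `k`, so `E[nK - T | K = k] = l` for all `k`. Conditional independence of `T` and `K'`
given `K` lets the event `{K ≤ K'}` be replaced by its conditional probability given `K`, whence
`E[(nK - T) 1{K ≤ K'}] = ∑ₖ P(K ≤ K', K = k) E[nK - T | K = k] = l P(K ≤ K')`.
-/

open MeasureTheory ProbabilityTheory

section DiscreteDecomposition

variable {Ω α β : Type*} [MeasurableSpace Ω] {P : Measure Ω}
  [MeasurableSpace α] [MeasurableSingletonClass α] [Countable α] {X : Ω → α}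

theorem hasSum_setIntegral_comp_preimage_singleton (hX : Measurable X) {E : Set Ω}
    (hE : MeasurableSet E) {c : α → ℝ} (hc : Integrable (fun ω => c (X ω)) P) :
    HasSum (fun a => c a * P.real (X ⁻¹' {a} ∩ E)) (∫ ω in E, c (X ω) ∂P) := by
  have hpart : ⋃ a, X ⁻¹' {a} ∩ E = E := by
    rw [← Set.iUnion_inter, ← Set.preimage_iUnion, Set.iUnion_singleton_eq_range, Set.range_id',
      Set.preimage_univ, Set.univ_inter]
  have h := hasSum_integral_iUnion (fun a => (hX (measurableSet_singleton a)).inter hE)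
    (fun a b hab => ((Set.disjoint_singleton.2 hab).preimage X).mono Set.inter_subset_left
      Set.inter_subset_left) (hc.integrableOn (s := ⋃ a, X ⁻¹' {a} ∩ E))
  rw [hpart] at h
  refine h.congr_fun fun a => ?_
  rw [setIntegral_congr_fun ((hX (measurableSet_singleton a)).inter hE)
    (fun ω hω => congrArg c hω.1), setIntegral_const, smul_eq_mul, mul_comm]

theorem tsum_mul_measureReal_preimage_singleton (hX : Measurable X) {c : α → ℝ}
    (hc : Integrable (fun ω => c (X ω)) P) (S : Set α) :
    ∑' a : S, c a * P.real (X ⁻¹' {(a : α)}) = ∫ ω in X ⁻¹' S, c (X ω) ∂P := by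
  rw [tsum_subtype S (fun a => c a * P.real (X ⁻¹' {a})),
    ← (hasSum_setIntegral_comp_preimage_singleton hX (hX (Set.to_countable S).measurableSet)
      hc).tsum_eq]
  refine tsum_congr fun a => ?_
  by_cases ha : a ∈ S
  · rw [Set.indicator_of_mem ha, ← Set.preimage_inter, Set.singleton_inter_of_mem ha]
  · simp [Set.indicator_of_notMem ha, ← Set.preimage_inter, Set.singleton_inter_eq_empty.2 ha]

theorem setIntegral_preimage_finset (hX : Measurable X) {c : α → ℝ}
    (hc : Integrable (fun ω => c (X ω)) P) (s : Finset α) :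
    ∫ ω in X ⁻¹' s, c (X ω) ∂P = ∑ a ∈ s, c a * P.real (X ⁻¹' {a}) := by
  rw [← tsum_mul_measureReal_preimage_singleton hX hc,
    Finset.tsum_subtype' s fun a => c a * P.real (X ⁻¹' {a})]

variable [IsFiniteMeasure P]

theorem measureReal_preimage_finset (hX : Measurable X) (s : Finset α) :
    P.real (X ⁻¹' s) = ∑ a ∈ s, P.real (X ⁻¹' {a}) := by
  simpa using setIntegral_preimage_finset hX (c := fun _ => 1) (integrable_const 1) s

theorem hasSum_measureReal_preimage_singleton_inter (hX : Measurable X) {E : Set Ω}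
    (hE : MeasurableSet E) : HasSum (fun a => P.real (X ⁻¹' {a} ∩ E)) (P.real E) := by
  simpa using hasSum_setIntegral_comp_preimage_singleton hX hE (c := fun _ => 1)
    (integrable_const 1)

theorem measureReal_preimage_inter_mul_eq_of_singleton {Y : Ω → α} (hY : Measurable Y)
    {A B : Set Ω} (hA : MeasurableSet A) (hB : MeasurableSet B) {x y : ℝ}
    (h : ∀ b, P.real (Y ⁻¹' {b} ∩ A) * x = y * P.real (Y ⁻¹' {b} ∩ B)) (S : Set α) :
    P.real (Y ⁻¹' S ∩ A) * x = y * P.real (Y ⁻¹' S ∩ B) := by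
  have hS : MeasurableSet (Y ⁻¹' S) := hY (Set.to_countable S).measurableSet
  refine ((hasSum_measureReal_preimage_singleton_inter hY (hS.inter hA)).mul_right x).unique
    (((hasSum_measureReal_preimage_singleton_inter hY (hS.inter hB)).mul_left y).congr_fun
      fun b => ?_)
  simp only [← Set.inter_assoc, ← Set.preimage_inter]
  by_cases hb : b ∈ S
  · rw [Set.singleton_inter_of_mem hb, h]
  · simp [Set.singleton_inter_eq_empty.2 hb]

theorem measureReal_inter_le_mul_eq_of_condIndep {f : α → ℕ} {K' : Ω → ℕ} (hX : Measurable X)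
    (hK' : Measurable K')
    (hcondind : ∀ t b k, P.real {ω | X ω = t ∧ K' ω = b ∧ f (X ω) = k} * P.real {ω | f (X ω) = k}
      = P.real {ω | X ω = t ∧ f (X ω) = k} * P.real {ω | K' ω = b ∧ f (X ω) = k}) (t : α) :
    P.real (X ⁻¹' {t} ∩ {ω | f (X ω) ≤ K' ω}) * P.real ((f ∘ X) ⁻¹' {f t})
      = P.real (X ⁻¹' {t}) * P.real ((f ∘ X) ⁻¹' {f t} ∩ {ω | f (X ω) ≤ K' ω}) := by
  have hfX : Measurable (f ∘ X) := (measurable_of_countable f).comp hX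
  have h := measureReal_preimage_inter_mul_eq_of_singleton hK'
    (x := P.real ((f ∘ X) ⁻¹' {f t})) (y := P.real (X ⁻¹' {t} ∩ (f ∘ X) ⁻¹' {f t}))
    ((hX (measurableSet_singleton t)).inter (hfX (measurableSet_singleton (f t))))
    (hfX (measurableSet_singleton (f t)))
    (fun b => (congrArg (P.real · * _) (Set.ext fun _ => and_left_comm)).trans
      (hcondind t b (f t))) (Set.Ici (f t))
  have hA : X ⁻¹' {t} ∩ (f ∘ X) ⁻¹' {f t} = X ⁻¹' {t} :=
    Set.inter_eq_left.2 fun ω hω => congrArg f hω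
  have hAS : K' ⁻¹' Set.Ici (f t) ∩ X ⁻¹' {t} = X ⁻¹' {t} ∩ {ω | f (X ω) ≤ K' ω} := by
    ext ω
    grind
  have hBS : K' ⁻¹' Set.Ici (f t) ∩ (f ∘ X) ⁻¹' {f t}
      = (f ∘ X) ⁻¹' {f t} ∩ {ω | f (X ω) ≤ K' ω} := by
    ext ω
    grind
  rwa [hA, hAS, hBS] at h

variable [MeasurableSpace β] [MeasurableSingletonClass β] [Countable β]

theorem setIntegral_comp_eq_mul_measureReal_of_condIndep {f : α → β} (hX : Measurable X)
    {E : Set Ω} (hE : MeasurableSet E) {c : α → ℝ} (hc : Integrable (fun ω => c (X ω)) P)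
    (hcond : ∀ a, P.real (X ⁻¹' {a} ∩ E) * P.real ((f ∘ X) ⁻¹' {f a})
      = P.real (X ⁻¹' {a}) * P.real ((f ∘ X) ⁻¹' {f a} ∩ E))
    {l : ℝ} (hmean : ∀ k, ∫ ω in (f ∘ X) ⁻¹' {k}, c (X ω) ∂P = l * P.real ((f ∘ X) ⁻¹' {k})) :
    ∫ ω in E, c (X ω) ∂P = l * P.real E := by
  -- `r k = P(E | f ∘ X = k)`, with the junk value `0` on null fibres, where `hr` and `hterm`
  -- hold trivially.
  set r : β → ℝ := fun k => P.real ((f ∘ X) ⁻¹' {k} ∩ E) / P.real ((f ∘ X) ⁻¹' {k})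
  have hr : ∀ k, P.real ((f ∘ X) ⁻¹' {k}) * r k = P.real ((f ∘ X) ⁻¹' {k} ∩ E) := by
    intro k
    by_cases hk : P.real ((f ∘ X) ⁻¹' {k}) = 0
    · rw [hk, zero_mul, measureReal_mono_null Set.inter_subset_left hk]
    · exact mul_div_cancel₀ _ hk
  have hterm : ∀ a, P.real (X ⁻¹' {a} ∩ E) = P.real (X ⁻¹' {a}) * r (f a) := by
    intro a
    by_cases ha : P.real ((f ∘ X) ⁻¹' {f a}) = 0
    · have hsub : X ⁻¹' {a} ⊆ (f ∘ X) ⁻¹' {f a} := fun ω hω => congrArg f hω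
      simp only [r, ha, div_zero, mul_zero]
      exact measureReal_mono_null (Set.inter_subset_left.trans hsub) ha
    · rw [mul_div_assoc', eq_div_iff ha, hcond]
  have hfiber := ((hasSum_setIntegral_comp_preimage_singleton hX hE hc).congr_fun
    fun a => by rw [hterm, ← mul_assoc]).tsum_fiberwise f
  refine hfiber.unique (((hasSum_measureReal_preimage_singleton_inter
    ((measurable_of_countable f).comp hX) hE).mul_left l).congr_fun fun k => ?_)
  calc ∑' a : f ⁻¹' {k}, c a * P.real (X ⁻¹' {(a : α)}) * r (f a)
      = (∑' a : f ⁻¹' {k}, c a * P.real (X ⁻¹' {(a : α)})) * r k := by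
        rw [← tsum_mul_right]
        exact tsum_congr fun a => by rw [a.2]
    _ = l * P.real ((f ∘ X) ⁻¹' {k} ∩ E) := by
        rw [tsum_mul_measureReal_preimage_singleton hX hc, ← Set.preimage_comp, hmean, mul_assoc,
          hr]

end DiscreteDecomposition

theorem sum_range_sub_one_sub_mul_pow {R : Type*} [CommRing R] (q : R) (n : ℕ) :
    (1 - q) ^ 2 * ∑ j ∈ Finset.range n, ((n : R) - 1 - j) * q ^ j
      = n * (1 - q) - (1 - q ^ n) := by
  induction n with
  | zero => simp
  | succ n ih =>
    rw [Finset.sum_range_succ, Nat.cast_succ]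
    have hshift : ∑ j ∈ Finset.range n, ((n : R) + 1 - 1 - j) * q ^ j
        = ∑ j ∈ Finset.range n, ((n : R) - 1 - j) * q ^ j + ∑ j ∈ Finset.range n, q ^ j := by
      rw [← Finset.sum_add_distrib]
      exact Finset.sum_congr rfl fun j _ => by ring
    rw [hshift]
    linear_combination ih - (1 - q) * geom_sum_mul q n

theorem sum_range_sub_one_sub_mul_pow_eq {p : ℝ} {n : ℕ} (hp : p ≠ 0) (hpn : (1 - p) ^ n ≠ 1) :
    ∑ j ∈ Finset.range n, ((n : ℝ) - 1 - j) * (1 - p) ^ j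
      = (n - 1 / p + n * (1 - p) ^ n / (1 - (1 - p) ^ n))
        * ∑ j ∈ Finset.range n, (1 - p) ^ j := by
  have hsq := sum_range_sub_one_sub_mul_pow (1 - p) n
  have hgeom := geom_sum_mul (1 - p) n
  rw [sub_sub_cancel] at hsq
  have hpn' : 1 - (1 - p) ^ n ≠ 0 := sub_ne_zero.2 (Ne.symm hpn)
  field_simp
  set S1 := ∑ j ∈ Finset.range n, ((n : ℝ) - 1 - j) * (1 - p) ^ j
  set S0 := ∑ j ∈ Finset.range n, (1 - p) ^ j
  linear_combination p * S1 * hgeom + S0 * hsq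

-- `⌈t / n⌉`: the batch at whose sampling slot `n * k` a change at slot `t` is first observed.
def batchIndex (n t : ℕ) : ℕ := (t + n - 1) / n

def samplingDelay (n t : ℕ) : ℝ := ((n * batchIndex n t : ℕ) : ℝ) - t

section BatchIndex

variable {n : ℕ} (hn : 0 < n)
include hn

theorem batchIndex_eq_zero_iff {t : ℕ} : batchIndex n t = 0 ↔ t = 0 := by
  rw [batchIndex, Nat.div_eq_iff hn]
  omega

theorem batchIndex_eq_succ_iff {t m : ℕ} :
    batchIndex n t = m + 1 ↔ t ∈ Finset.Ico (m * n + 1) (m * n + 1 + n) := by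
  rw [batchIndex, Nat.div_eq_iff hn, Finset.mem_Ico, add_mul, one_mul]
  omega

theorem abs_samplingDelay_le (t : ℕ) : |samplingDelay n t| ≤ n := by
  have hdiv := Nat.div_add_mod (t + n - 1) n
  have hmod := Nat.mod_lt (t + n - 1) hn
  have hle : t ≤ n * batchIndex n t := by unfold batchIndex; omega
  have hlt : n * batchIndex n t ≤ t + n := by unfold batchIndex; omega
  have hle' : (t : ℝ) ≤ ((n * batchIndex n t : ℕ) : ℝ) := by exact_mod_cast hle
  have hlt' : ((n * batchIndex n t : ℕ) : ℝ) ≤ t + n := by exact_mod_cast hlt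
  rw [samplingDelay, abs_le]
  constructor <;> linarith

theorem integrable_samplingDelay_comp {Ω : Type*} [MeasurableSpace Ω] {P : Measure Ω}
    [IsFiniteMeasure P] {T : Ω → ℕ} (hT : Measurable T) :
    Integrable (fun ω => samplingDelay n (T ω)) P :=
  .of_bound ((measurable_of_countable (samplingDelay n)).comp hT).aestronglyMeasurable n
    (ae_of_all _ fun ω => abs_samplingDelay_le hn (T ω))

end BatchIndex

section GeometricChangeTime

variable {Ω : Type*} [MeasurableSpace Ω] {P : Measure Ω} [IsProbabilityMeasure P] {p : ℝ}
  {T : Ω → ℕ} (hT : Measurable T)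
  (hTdist : ∀ t, 1 ≤ t → P.real (T ⁻¹' {t}) = p * (1 - p) ^ (t - 1))
include hT hTdist

theorem measureReal_preimage_zero_of_geometric (hp0 : 0 < p) (hp1 : p ≤ 1) :
    P.real (T ⁻¹' {0}) = 0 := by
  have htotal : HasSum (fun t => P.real (T ⁻¹' {t})) 1 := by
    simpa using hasSum_measureReal_preimage_singleton_inter hT MeasurableSet.univ (P := P)
  have hgeom : HasSum (fun t => P.real (T ⁻¹' {t + 1})) 1 := by
    have h := (hasSum_geometric_of_lt_one (sub_nonneg.2 hp1) (by linarith : 1 - p < 1)).mul_left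
      p
    rw [sub_sub_cancel, mul_inv_cancel₀ hp0.ne'] at h
    exact h.congr_fun fun t => by rw [hTdist (t + 1) le_add_self, Nat.add_sub_cancel]
  have hshift := (hasSum_nat_add_iff' 1).2 htotal
  simp only [Finset.range_one, Finset.sum_singleton] at hshift
  linarith [hgeom.unique hshift]

theorem setIntegral_samplingDelay_preimage_batchIndex {n : ℕ} (hn : 0 < n) (hp0 : 0 < p)
    (hp1 : p ≤ 1) (k : ℕ) :
    ∫ ω in (batchIndex n ∘ T) ⁻¹' {k}, samplingDelay n (T ω) ∂P
      = (n - 1 / p + n * (1 - p) ^ n / (1 - (1 - p) ^ n))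
        * P.real ((batchIndex n ∘ T) ⁻¹' {k}) := by
  cases k with
  | zero =>
    have hset : (batchIndex n ∘ T) ⁻¹' {0} = T ⁻¹' {0} := by
      ext ω
      simp [batchIndex_eq_zero_iff hn]
    have h0 := measureReal_preimage_zero_of_geometric hT hTdist hp0 hp1
    rw [hset, setIntegral_measure_zero _ ((measureReal_eq_zero_iff).1 h0), h0, mul_zero]
  | succ m =>
    have hset : (batchIndex n ∘ T) ⁻¹' {m + 1}
        = T ⁻¹' ↑(Finset.Ico (m * n + 1) (m * n + 1 + n)) := by
      ext ω
      simp [batchIndex_eq_succ_iff hn]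
    have hpn : (1 - p) ^ n ≠ 1 :=
      (pow_lt_one₀ (sub_nonneg.2 hp1) (by linarith) hn.ne').ne
    have hprob : ∀ j,
        P.real (T ⁻¹' {m * n + 1 + j}) = (1 - p) ^ j * (p * (1 - p) ^ (m * n)) := by
      intro j
      rw [hTdist _ (by omega), show m * n + 1 + j - 1 = m * n + j by omega, pow_add]
      ring
    have hdelay : ∀ j < n, samplingDelay n (m * n + 1 + j) = n - 1 - j := by
      intro j hj
      rw [samplingDelay, (batchIndex_eq_succ_iff hn (m := m)).2
        (Finset.mem_Ico.2 ⟨by omega, by omega⟩)]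
      push_cast
      ring
    rw [hset, setIntegral_preimage_finset hT (integrable_samplingDelay_comp hn hT),
      measureReal_preimage_finset hT, Finset.sum_Ico_eq_sum_range, Finset.sum_Ico_eq_sum_range,
      Nat.add_sub_cancel_left]
    simp only [hprob]
    rw [Finset.sum_congr rfl fun j hj => by rw [hdelay j (Finset.mem_range.1 hj), ← mul_assoc],
      ← Finset.sum_mul, ← Finset.sum_mul, sum_range_sub_one_sub_mul_pow_eq hp0.ne' hpn, mul_assoc]

end GeometricChangeTime

/-- Coarse-sampling-delay decoupling step in the proof of Theorem 1: if the change
time `T` is geometric (`P(T = t) = p (1-p)^(t-1)` for `t ≥ 1`), sampling is every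
`n` slots so that `K = ⌈T/n⌉`, and the stopping batch index `K'` is conditionally
independent of `T` given `K`, then
`E[(nK - T) · 1{K' ≥ K}] = l · P(K' ≥ K)` with
`l = n - 1/p + n (1-p)^n / (1 - (1-p)^n)`. -/
theorem coarse_sampling_delay_decoupling
    {Ω : Type*} [MeasurableSpace Ω] (P : Measure Ω) [IsProbabilityMeasure P]
    (p : ℝ) (hp0 : 0 < p) (hp1 : p < 1)
    (T : Ω → ℕ) (hT : Measurable T)
    (hTdist : ∀ t : ℕ, 1 ≤ t →
      (P {ω | T ω = t}).toReal = p * (1 - p) ^ (t - 1))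
    (n : ℕ) (hn : 1 ≤ n)
    (K : Ω → ℕ) (hK : ∀ ω, K ω = (T ω + n - 1) / n)
    (K' : Ω → ℕ) (hK' : Measurable K')
    (hcondind : ∀ t b k : ℕ,
      (P {ω | T ω = t ∧ K' ω = b ∧ K ω = k}).toReal * (P {ω | K ω = k}).toReal
        = (P {ω | T ω = t ∧ K ω = k}).toReal
            * (P {ω | K' ω = b ∧ K ω = k}).toReal)
    (l : ℝ)
    (hl : l = (n : ℝ) - 1 / p + (n : ℝ) * (1 - p) ^ n / (1 - (1 - p) ^ n)) :
    ∫ ω, (if K ω ≤ K' ω then ((n * K ω : ℕ) : ℝ) - (T ω : ℝ) else 0) ∂P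
      = l * (P {ω | K ω ≤ K' ω}).toReal := by
  obtain rfl : K = batchIndex n ∘ T := funext hK
  have hE : MeasurableSet {ω | batchIndex n (T ω) ≤ K' ω} :=
    measurableSet_le ((measurable_of_countable (batchIndex n)).comp hT) hK'
  subst hl
  refine Eq.trans ?_ (setIntegral_comp_eq_mul_measureReal_of_condIndep hT hE
    (integrable_samplingDelay_comp hn hT)
    (measureReal_inter_le_mul_eq_of_condIndep hT hK' hcondind)
    (setIntegral_samplingDelay_preimage_batchIndex hT hTdist hn hp0 hp1.le))
  rw [← integral_indicator hE]
  congr with ω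
  simp [Set.indicator_apply, samplingDelay]
end

section
/- Let (X, 𝒜, μ) be a measure space, let φ₀, φ₁, φ₂ : X → [0,∞) be measurable functions with ∫φᵢ dμ = 1 for i=0,1,2, and let 0 < q < 1. Let f : [0,1] → ℝ be concave. For y ∈ [0,1], define φ_y(x) = y·φ₂(x) + (1-y)q·φ₁(x) + (1-y)(1-q)·φ₀(x), and define h(y) = ∫_X f( (y·φ₂(x) + (1-y)q·φ₁(x)) / φ_y(x) )·φ_y(x) dμ(x), where the integrand is taken to be 0 at points x with φ_y(x)=0. Then h is concave on [0,1]. -/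
/-!
The perspective `P(a, s) = s · f(a / s)` of a function `f` concave on `[0, 1]` is jointly concave on
the cone `0 ≤ a ≤ s`, being positively homogeneous and superadditive. For fixed `x`, the pair
`(y φ₂ x + (1 - y) q φ₁ x, φ_y x)` depends affinely on `y` and stays in that cone, so the integrand
is concave in `y`; integration preserves concavity. Integrability holds because `f` is bounded on
`[0, 1]` and `f ∘ r` is measurable for measurable `r` with values in `[0, 1]`, the superlevel sets
of `f` being intervals.
-/

open MeasureTheory Set

noncomputable def perspective (f : ℝ → ℝ) (p : ℝ × ℝ) : ℝ := f (p.1 / p.2) * p.2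

def coneOverUnitInterval : Set (ℝ × ℝ) := {p | 0 ≤ p.1 ∧ p.1 ≤ p.2}

theorem convex_coneOverUnitInterval : Convex ℝ coneOverUnitInterval := by
  rintro ⟨a₁, s₁⟩ ⟨h₁, h₁'⟩ ⟨a₂, s₂⟩ ⟨h₂, h₂'⟩ t u ht hu -
  simp only [coneOverUnitInterval, mem_ofPred_eq, Prod.fst_add, Prod.snd_add, Prod.smul_fst,
    Prod.smul_snd, smul_eq_mul] at *
  constructor
  · positivity
  · gcongr

theorem div_mem_Icc_of_mem_coneOverUnitInterval {p : ℝ × ℝ} (hp : p ∈ coneOverUnitInterval) :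
    p.1 / p.2 ∈ Icc (0 : ℝ) 1 :=
  ⟨div_nonneg hp.1 (hp.1.trans hp.2), div_le_one_of_le₀ hp.2 (hp.1.trans hp.2)⟩

theorem perspective_smul (f : ℝ → ℝ) {t : ℝ} (ht : 0 ≤ t) (p : ℝ × ℝ) :
    perspective f (t • p) = t * perspective f p := by
  rcases ht.eq_or_lt with rfl | ht
  · simp [perspective]
  · simp only [perspective, Prod.smul_fst, Prod.smul_snd, smul_eq_mul,
      mul_div_mul_left _ _ ht.ne']
    ring

theorem ConcaveOn.perspective_add_le {f : ℝ → ℝ} (hf : ConcaveOn ℝ (Icc 0 1) f) {p q : ℝ × ℝ}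
    (hp : p ∈ coneOverUnitInterval) (hq : q ∈ coneOverUnitInterval) :
    perspective f p + perspective f q ≤ perspective f (p + q) := by
  rcases (hp.1.trans hp.2).eq_or_lt with hp0 | hp0
  · have : p = 0 := Prod.ext (le_antisymm (hp.2.trans hp0.ge) hp.1) hp0.symm
    simp [this, perspective]
  rcases (hq.1.trans hq.2).eq_or_lt with hq0 | hq0
  · have : q = 0 := Prod.ext (le_antisymm (hq.2.trans hq0.ge) hq.1) hq0.symm
    simp [this, perspective]
  have hs : 0 < p.2 + q.2 := add_pos hp0 hq0
  -- weighted by `p.2` and `q.2`, the ratios of `p` and `q` average to that of `p + q`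
  have h := hf.2 (div_mem_Icc_of_mem_coneOverUnitInterval hp)
    (div_mem_Icc_of_mem_coneOverUnitInterval hq) (div_pos hp0 hs).le (div_pos hq0 hs).le
    (by rw [← add_div, div_self hs.ne'])
  simp only [smul_eq_mul] at h
  have hmid : p.2 / (p.2 + q.2) * (p.1 / p.2) + q.2 / (p.2 + q.2) * (q.1 / q.2)
      = (p + q).1 / (p + q).2 := by
    simp only [Prod.fst_add, Prod.snd_add]
    field_simp
  rw [hmid] at h
  calc perspective f p + perspective f q
      = (p.2 / (p.2 + q.2) * f (p.1 / p.2) + q.2 / (p.2 + q.2) * f (q.1 / q.2)) * (p + q).2 := by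
        simp only [perspective, Prod.snd_add]
        field_simp
    _ ≤ perspective f (p + q) := mul_le_mul_of_nonneg_right h (by simpa using hs.le)

theorem concaveOn_perspective {f : ℝ → ℝ} (hf : ConcaveOn ℝ (Icc 0 1) f) :
    ConcaveOn ℝ coneOverUnitInterval (perspective f) := by
  refine ⟨convex_coneOverUnitInterval, fun p hp q hq a b ha hb _ => ?_⟩
  rw [smul_eq_mul, smul_eq_mul, ← perspective_smul f ha, ← perspective_smul f hb]
  have hK : (0 : ℝ × ℝ) ∈ coneOverUnitInterval := ⟨le_rfl, le_rfl⟩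
  exact hf.perspective_add_le
    (convex_coneOverUnitInterval.smul_mem_of_zero_mem hK hp ⟨ha, by linarith⟩)
    (convex_coneOverUnitInterval.smul_mem_of_zero_mem hK hq ⟨hb, by linarith⟩)

theorem ConcaveOn.comp_lineMap {𝕜 E β : Type*} [Field 𝕜] [LinearOrder 𝕜] [IsStrictOrderedRing 𝕜]
    [AddCommGroup E] [Module 𝕜 E] [AddCommMonoid β] [PartialOrder β] [SMul 𝕜 β]
    {s : Set E} {f : E → β} (hf : ConcaveOn 𝕜 s f) {x y : E} (hx : x ∈ s) (hy : y ∈ s) :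
    ConcaveOn 𝕜 (Icc (0 : 𝕜) 1) (fun t => f (AffineMap.lineMap x y t)) :=
  (hf.comp_affineMap (AffineMap.lineMap x y)).subset (fun _ ht => hf.1.lineMap_mem hx hy ht)
    (convex_Icc 0 1)

theorem ConcaveOn.measurable_comp {s : Set ℝ} {f : ℝ → ℝ} (hf : ConcaveOn ℝ s f)
    {X : Type*} [MeasurableSpace X] {r : X → ℝ} (hr : Measurable r) (hrs : ∀ x, r x ∈ s) :
    Measurable (fun x => f (r x)) := by
  refine measurable_of_Ioi fun c => ?_
  have : (fun x => f (r x)) ⁻¹' Ioi c = r ⁻¹' {t ∈ s | c < f t} := by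
    ext x; simp [hrs x]
  rw [this]
  exact hr (hf.convex_gt c).ordConnected.measurableSet

theorem ConcaveOn.exists_forall_abs_le {f : ℝ → ℝ} {a b : ℝ} (hf : ConcaveOn ℝ (Icc a b) f) :
    ∃ C, ∀ t ∈ Icc a b, |f t| ≤ C := by
  have hmin : ∀ t ∈ Icc a b, min (f a) (f b) ≤ f t := fun t ht =>
    hf.min_le_of_mem_Icc (left_mem_Icc.2 (ht.1.trans ht.2)) (right_mem_Icc.2 (ht.1.trans ht.2)) ht
  -- `t` and its mirror image `a + b - t` average to the midpoint
  have hmax : ∀ t ∈ Icc a b, f t + f (a + b - t) ≤ 2 * f ((a + b) / 2) := by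
    intro t ht
    have ht' : a + b - t ∈ Icc a b := ⟨by linarith [ht.2], by linarith [ht.1]⟩
    have := hf.2 ht ht' (by norm_num : (0 : ℝ) ≤ 1 / 2)
      (by norm_num : (0 : ℝ) ≤ 1 / 2) (by norm_num)
    simp only [smul_eq_mul] at this
    rw [show 1 / 2 * t + 1 / 2 * (a + b - t) = (a + b) / 2 by ring] at this
    linarith
  refine ⟨|min (f a) (f b)| + 2 * |f ((a + b) / 2)|, fun t ht => abs_le.2 ⟨?_, ?_⟩⟩
  · linarith [hmin t ht, neg_abs_le (min (f a) (f b)), abs_nonneg (f ((a + b) / 2))]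
  · have ht' : a + b - t ∈ Icc a b := ⟨by linarith [ht.2], by linarith [ht.1]⟩
    linarith [hmax t ht, hmin _ ht', neg_abs_le (min (f a) (f b)), le_abs_self (f ((a + b) / 2))]

theorem integrable_perspective {f : ℝ → ℝ} (hf : ConcaveOn ℝ (Icc 0 1) f)
    {X : Type*} [MeasurableSpace X] {μ : Measure X} {p : X → ℝ × ℝ} (hp : Measurable p)
    (hpK : ∀ x, p x ∈ coneOverUnitInterval) (hint : Integrable (fun x => (p x).2) μ) :
    Integrable (fun x => perspective f (p x)) μ := by
  obtain ⟨C, hC⟩ := hf.exists_forall_abs_le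
  refine hint.bdd_mul (c := C) ?_ (ae_of_all _ fun x => ?_)
  · exact (hf.measurable_comp (hp.fst.div hp.snd)
      fun x => div_mem_Icc_of_mem_coneOverUnitInterval (hpK x)).aestronglyMeasurable
  · exact hC _ (div_mem_Icc_of_mem_coneOverUnitInterval (hpK x))

theorem ConcaveOn.integral {E X : Type*} [AddCommGroup E] [Module ℝ E] [MeasurableSpace X]
    {μ : Measure X} {s : Set E} {g : E → X → ℝ} (hs : Convex ℝ s)
    (hg : ∀ᵐ x ∂μ, ConcaveOn ℝ s (g · x)) (hint : ∀ y ∈ s, Integrable (g y) μ) :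
    ConcaveOn ℝ s (fun y => ∫ x, g y x ∂μ) := by
  refine ⟨hs, fun y₁ hy₁ y₂ hy₂ a b ha hb hab => ?_⟩
  simp only [smul_eq_mul]
  rw [← integral_const_mul, ← integral_const_mul,
    ← integral_add ((hint y₁ hy₁).const_mul a) ((hint y₂ hy₂).const_mul b)]
  refine integral_mono_ae (((hint y₁ hy₁).const_mul a).add ((hint y₂ hy₂).const_mul b))
    (hint _ (hs hy₁ hy₂ ha hb hab)) ?_
  filter_upwards [hg] with x hx
  exact hx.2 hy₁ hy₂ ha hb hab

theorem bayes_update_preserves_concavity_general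
    {X : Type*} [MeasurableSpace X] (μ : Measure X)
    (φ₀ φ₁ φ₂ : X → ℝ)
    (hm₀ : Measurable φ₀) (hm₁ : Measurable φ₁) (hm₂ : Measurable φ₂)
    (hnn₀ : ∀ x, 0 ≤ φ₀ x) (hnn₁ : ∀ x, 0 ≤ φ₁ x) (hnn₂ : ∀ x, 0 ≤ φ₂ x)
    (hi₀ : Integrable φ₀ μ) (hi₁ : Integrable φ₁ μ) (hi₂ : Integrable φ₂ μ)
    (q : ℝ) (hq0 : 0 < q) (hq1 : q < 1)
    (f : ℝ → ℝ) (hf : ConcaveOn ℝ (Set.Icc (0 : ℝ) 1) f) :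
    ConcaveOn ℝ (Set.Icc (0 : ℝ) 1) (fun y =>
      ∫ x,
        f ((y * φ₂ x + (1 - y) * q * φ₁ x) /
            (y * φ₂ x + (1 - y) * q * φ₁ x + (1 - y) * (1 - q) * φ₀ x))
          * (y * φ₂ x + (1 - y) * q * φ₁ x + (1 - y) * (1 - q) * φ₀ x) ∂μ) := by
  set p₀ : X → ℝ × ℝ := fun x => (q * φ₁ x, q * φ₁ x + (1 - q) * φ₀ x)
  set p₁ : X → ℝ × ℝ := fun x => (φ₂ x, φ₂ x)
  have hp₀ : ∀ x, p₀ x ∈ coneOverUnitInterval := fun x =>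
    ⟨mul_nonneg hq0.le (hnn₁ x), le_add_of_nonneg_right (mul_nonneg (by linarith) (hnn₀ x))⟩
  have hp₁ : ∀ x, p₁ x ∈ coneOverUnitInterval := fun x => ⟨hnn₂ x, le_rfl⟩
  have hlineMap : ∀ (y : ℝ) x, AffineMap.lineMap (p₀ x) (p₁ x) y = (y * φ₂ x + (1 - y) * q * φ₁ x,
      y * φ₂ x + (1 - y) * q * φ₁ x + (1 - y) * (1 - q) * φ₀ x) := by
    intro y x
    simp only [AffineMap.lineMap_apply_module, p₀, p₁, Prod.smul_mk, Prod.mk_add_mk, smul_eq_mul]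
    congr 1 <;> ring
  have hint : ∀ y ∈ Set.Icc (0 : ℝ) 1,
      Integrable (fun x => perspective f (AffineMap.lineMap (p₀ x) (p₁ x) y)) μ := by
    intro y hy
    refine integrable_perspective hf ?_
      (fun x => convex_coneOverUnitInterval.lineMap_mem (hp₀ x) (hp₁ x) hy) ?_
    · simp only [hlineMap]; fun_prop
    · simp only [hlineMap]
      exact ((hi₂.const_mul y).add (hi₁.const_mul ((1 - y) * q))).add
        (hi₀.const_mul ((1 - y) * (1 - q)))
  simpa only [perspective, hlineMap] using ConcaveOn.integral (convex_Icc 0 1)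
    (ae_of_all μ fun x => (concaveOn_perspective hf).comp_lineMap (hp₀ x) (hp₁ x)) hint

/-- Concavity preservation under the Bayesian update (Lemma of Appendix VI):
if `f` is concave on `[0,1]`, `φ₀, φ₁, φ₂` are probability densities on `X`, and
`0 < q < 1`, then `y ↦ ∫ f((y φ₂ + (1-y)q φ₁)/φ_y) · φ_y dμ` is concave on `[0,1]`,
where `φ_y = y φ₂ + (1-y)q φ₁ + (1-y)(1-q) φ₀` (the integrand being `0` where
`φ_y` vanishes; division by zero yields `0` in Lean, so the factor `φ_y` kills
those points). -/
theorem bayes_update_preserves_concavity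
    {X : Type*} [MeasurableSpace X] (μ : Measure X)
    (φ₀ φ₁ φ₂ : X → ℝ)
    (hm₀ : Measurable φ₀) (hm₁ : Measurable φ₁) (hm₂ : Measurable φ₂)
    (hnn₀ : ∀ x, 0 ≤ φ₀ x) (hnn₁ : ∀ x, 0 ≤ φ₁ x) (hnn₂ : ∀ x, 0 ≤ φ₂ x)
    (hi₀ : Integrable φ₀ μ) (hi₁ : Integrable φ₁ μ) (hi₂ : Integrable φ₂ μ)
    (hp₀ : ∫ x, φ₀ x ∂μ = 1) (hp₁ : ∫ x, φ₁ x ∂μ = 1) (hp₂ : ∫ x, φ₂ x ∂μ = 1)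
    (q : ℝ) (hq0 : 0 < q) (hq1 : q < 1)
    (f : ℝ → ℝ) (hf : ConcaveOn ℝ (Set.Icc (0 : ℝ) 1) f) :
    ConcaveOn ℝ (Set.Icc (0 : ℝ) 1) (fun y =>
      ∫ x,
        f ((y * φ₂ x + (1 - y) * q * φ₁ x) /
            (y * φ₂ x + (1 - y) * q * φ₁ x + (1 - y) * (1 - q) * φ₀ x))
          * (y * φ₂ x + (1 - y) * q * φ₁ x + (1 - y) * (1 - q) * φ₀ x) ∂μ) :=
  bayes_update_preserves_concavity_general μ φ₀ φ₁ φ₂ hm₀ hm₁ hm₂ hnn₀ hnn₁ hnn₂ hi₀ hi₁ hi₂ q hq0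
    hq1 f hf
end
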